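/- arXiv:0802.0137 — 3 statements merged into one kernel-verified Lean document; each statement's English description precedes it below -/
import Mathlib

section
/- Let V be a type, r a binary relation on V, and f : Set V → Set V a function such that for every A ⊆ V the restriction of r to A \ f(A) is acyclic. For T ∈ V let anc_r(T) = {x | ReflTransGen r x T} be its ancestor set, and define the committed set C = {T | T ∉ f(anc_r(T))}. Then the restriction of r to C is acyclic. -/
/-!
Every vertex on a cycle of committed transactions is mutually reachable with any
other vertex of the cycle, so all of them have the same ancestor set `A`. Being
committed, none of them lies in `f A`, so the cycle is a cycle of `r` restricted to
`A \ f A`, which `f` was assumed to make acyclic.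
-/

namespace Relation

variable {α : Type*} {r : α → α → Prop} {x y : α}

theorem setOf_reflTransGen_eq_of_reflTransGen (hxy : ReflTransGen r x y)
    (hyx : ReflTransGen r y x) : {z | ReflTransGen r z x} = {z | ReflTransGen r z y} :=
  Set.ext fun _ => ⟨(·.trans hxy), (·.trans hyx)⟩

theorem TransGen.cycle_within_component (h : TransGen r x x) :
    TransGen (fun a b => r a b ∧ ReflTransGen r x a ∧ ReflTransGen r b x) x x := by
  suffices ∀ b, TransGen r x b → ReflTransGen r b x →
      TransGen (fun a b => r a b ∧ ReflTransGen r x a ∧ ReflTransGen r b x) x b from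
    this x h .refl
  intro b hxb
  induction hxb with
  | single hxb => exact fun hbx => .single ⟨hxb, .refl, hbx⟩
  | tail hxa hab ih => exact fun hbx => (ih (hbx.head hab)).tail ⟨hab, hxa.to_reflTransGen, hbx⟩

end Relation

open Relation in
/-- If `f` returns a feedback vertex set of any induced subgraph, then the set of
vertices `T` not in the feedback set of their own ancestor set induces an acyclic
subgraph. -/
theorem committed_acyclic {V : Type*} (r : V → V → Prop) (f : Set V → Set V)
    (hf : ∀ A : Set V, ∀ x ∈ A \ f A,
      ¬ Relation.TransGen (fun a b => a ∈ A \ f A ∧ b ∈ A \ f A ∧ r a b) x x) :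
    ∀ x ∈ {T | T ∉ f {y | Relation.ReflTransGen r y T}},
      ¬ Relation.TransGen
        (fun a b => a ∈ {T | T ∉ f {y | Relation.ReflTransGen r y T}} ∧
                    b ∈ {T | T ∉ f {y | Relation.ReflTransGen r y T}} ∧ r a b) x x := by
  intro x hx hcycle
  set A := {y | ReflTransGen r y x}
  have mem_of_mutual : ∀ a, a ∉ f {y | ReflTransGen r y a} →
      ReflTransGen r x a → ReflTransGen r a x → a ∈ A \ f A := fun a ha hxa hax =>
    ⟨hax, by rwa [setOf_reflTransGen_eq_of_reflTransGen hax hxa] at ha⟩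
  refine hf A x (mem_of_mutual x hx .refl .refl)
    (TransGen.mono ?_ _ _ hcycle.cycle_within_component)
  rintro a b ⟨⟨ha, hb, hab⟩, hxa, hbx⟩
  have hxa : ReflTransGen r x a := ReflTransGen.mono (fun _ _ h => h.2.2) _ _ hxa
  have hbx : ReflTransGen r b x := ReflTransGen.mono (fun _ _ h => h.2.2) _ _ hbx
  exact ⟨mem_of_mutual a ha hxa (hbx.head hab), mem_of_mutual b hb (hxa.tail hab) hbx, hab⟩
end

section
/- Let V be a type, r a binary relation on V, Ab ⊆ V a set of aborted vertices, and f : Set V → Set V a function such that for every A ⊆ V the restriction of r to A \ f(A) is acyclic. For T ∈ V let anc_r(T) = {x | ReflTransGen r x T}, and let U(T) be the set of vertices x ∈ anc_r(T) \ Ab such that the transitive closure of the restriction of r to anc_r(T) \ Ab relates x to x (the union of the cycles of non-aborted vertices inside T's predecessor graph). Define the committed set C = {T | T ∉ Ab ∧ T ∉ f(U(T))}. Then the restriction of r to C is acyclic. -/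
/-!
All vertices of a committed cycle through `x` lie in one strongly connected component of `r`,
so they have the same ancestor set as `x` and hence the same set `U x`. Each of them is
non-aborted and lies on a cycle of non-aborted ancestors of `x`, so it belongs to `U x`; being
committed, it is not in `f (U x)`. The cycle therefore survives in `U x \ f (U x)`, which the
feedback-set property of `f` forbids.
-/

namespace Relation

variable {α : Type*}

def restrict (p : α → α → Prop) (s : Set α) : α → α → Prop :=
  fun a b => a ∈ s ∧ b ∈ s ∧ p a b

def strongComponent (p : α → α → Prop) (c : α) : Set α :=
  {u | ReflTransGen p c u ∧ ReflTransGen p u c}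

variable {p : α → α → Prop} {a b c : α}

theorem restrict_le (s : Set α) : restrict p s ≤ p := fun _ _ e => e.2.2

theorem TransGen.restrict_strongComponent (hab : TransGen p a b)
    (hca : ReflTransGen p c a) (hbc : ReflTransGen p b c) :
    TransGen (restrict p (strongComponent p c)) a b := by
  induction hab with
  | single h => exact .single ⟨⟨hca, .head h hbc⟩, ⟨hca.tail h, hbc⟩, h⟩
  | @tail b' b hab' h ih =>
    have hcb' : ReflTransGen p c b' := hca.trans hab'.to_reflTransGen
    exact (ih (.head h hbc)).tail ⟨⟨hcb', .head h hbc⟩, ⟨hcb'.tail h, hbc⟩, h⟩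

theorem TransGen.of_mem_strongComponent (h : TransGen p c c) (ha : a ∈ strongComponent p c) :
    TransGen p a a :=
  (TransGen.trans_right ha.2 h).trans_left ha.1

end Relation

open Relation

/-- Abstract form of the paper's decide procedure: committing `T` iff it is not
aborted and not in the feedback set computed on the union of non-aborted cycles
of its predecessor graph yields an acyclic committed subgraph. -/
theorem decide_acyclic {V : Type*} (r : V → V → Prop) (Ab : Set V) (f : Set V → Set V)
    (hf : ∀ A : Set V, ∀ x ∈ A \ f A,
      ¬ Relation.TransGen (fun a b => a ∈ A \ f A ∧ b ∈ A \ f A ∧ r a b) x x) :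
    let anc : V → Set V := fun T => {x | Relation.ReflTransGen r x T}
    let U : V → Set V := fun T =>
      {x | x ∈ anc T \ Ab ∧
        Relation.TransGen (fun a b => a ∈ anc T \ Ab ∧ b ∈ anc T \ Ab ∧ r a b) x x}
    let C : Set V := {T | T ∉ Ab ∧ T ∉ f (U T)}
    ∀ x ∈ C, ¬ Relation.TransGen (fun a b => a ∈ C ∧ b ∈ C ∧ r a b) x x := by
  intro anc U C x hx hcyc
  set S := strongComponent (restrict r C) x
  have to_r {a b : V} : ReflTransGen (restrict r C) a b → ReflTransGen r a b :=
    ReflTransGen.mono (restrict_le C) a b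
  have mem_anc : ∀ y ∈ S, y ∈ anc x := fun y hy => to_r hy.2
  have U_eq : ∀ y ∈ S, U y = U x := by
    intro y hy
    have anc_eq : anc y = anc x :=
      Set.ext fun z => ⟨fun h => h.trans (mem_anc y hy), fun h => h.trans (to_r hy.1)⟩
    simp only [U, anc_eq]
  have mem_U : ∀ y ∈ S, y ∈ C → y ∈ U x := fun y hy hyC =>
    ⟨⟨mem_anc y hy, hyC.1⟩,
      TransGen.mono
        (fun _ _ ⟨ha, hb, e⟩ => ⟨⟨mem_anc _ ha, e.1.1⟩, ⟨mem_anc _ hb, e.2.1.1⟩, e.2.2⟩)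
        _ _ ((hcyc.of_mem_strongComponent hy).restrict_strongComponent hy.1 hy.2)⟩
  have survives : ∀ y ∈ S, y ∈ C → y ∈ U x \ f (U x) := fun y hy hyC =>
    ⟨mem_U y hy hyC, U_eq y hy ▸ hyC.2⟩
  refine hf (U x) x (survives x ⟨.refl, .refl⟩ hx) ?_
  exact TransGen.mono
    (fun a b ⟨ha, hb, e⟩ => ⟨survives a ha e.1, survives b hb e.2.1, e.2.2⟩)
    _ _ (hcyc.restrict_strongComponent .refl .refl)
end

section
/- Let V be a type, ρ a binary relation on V, and r, r' two subrelations of ρ (for all a b, r a b → ρ a b and r' a b → ρ a b). Fix T ∈ V and suppose both r and r' contain every ρ-edge whose target is a ρ-ancestor of T, i.e. for all a b, if ρ a b and ReflTransGen ρ b T then r a b and r' a b. Then the ancestor sets of T under r and r' coincide: {x | ReflTransGen r x T} = {x | ReflTransGen r' x T}. -/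
/-! A site at which `T` is closed holds every edge of every `ρ`-path ending at `T`, so its
ancestor set of `T` is exactly the `ρ`-ancestor set of `T`; two such sites therefore agree. -/

open Relation

section

variable {V : Type*} {ρ s : V → V → Prop} {T : V}

theorem Relation.ReflTransGen.of_closed
    (hclosed : ∀ a b, ρ a b → ReflTransGen ρ b T → s a b) {x : V} (h : ReflTransGen ρ x T) :
    ReflTransGen s x T := by
  induction h using ReflTransGen.head_induction_on with
  | refl => exact .refl
  | head hab hbT ih => exact .head (hclosed _ _ hab hbT) ih

theorem setOf_reflTransGen_eq_of_closed (hsub : ∀ a b, s a b → ρ a b)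
    (hclosed : ∀ a b, ρ a b → ReflTransGen ρ b T → s a b) :
    {x | ReflTransGen s x T} = {x | ReflTransGen ρ x T} :=
  Set.ext fun _ => ⟨ReflTransGen.mono hsub _ _, ReflTransGen.of_closed hclosed⟩

end

/-- Any two sites at which `T` is closed agree on the predecessor graph of `T`. -/
theorem closed_ancestors_agree {V : Type*} (ρ r r' : V → V → Prop) (T : V)
    (hsub : ∀ a b, r a b → ρ a b) (hsub' : ∀ a b, r' a b → ρ a b)
    (hclosed : ∀ a b, ρ a b → Relation.ReflTransGen ρ b T → r a b)
    (hclosed' : ∀ a b, ρ a b → Relation.ReflTransGen ρ b T → r' a b) :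
    {x | Relation.ReflTransGen r x T} = {x | Relation.ReflTransGen r' x T} := by
  rw [setOf_reflTransGen_eq_of_closed hsub hclosed, setOf_reflTransGen_eq_of_closed hsub' hclosed']
end
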